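/- arXiv:1802.08821 — 3 statements merged into one kernel-verified Lean document; each statement's English description precedes it below -/
import Mathlib

section
/- For Hermitian matrices H and ρ with ρ positive definite, if [H, ρ] ≠ 0 then -Tr([H,ρ]·[H, log ρ]) > 0. -/
open Matrix
open scoped ComplexOrder

/-- `IsSpectralLog ρ L` : `ρ` is positive definite with spectral decomposition
`ρ = U (diag d) U†`, `d i > 0`, and `L = U (diag (log d)) U†` is its matrix logarithm. -/
def IsSpectralLog {n : ℕ} (ρ L : Matrix (Fin n) (Fin n) ℂ) : Prop :=
  ∃ U : Matrix.unitaryGroup (Fin n) ℂ, ∃ d : Fin n → ℝ,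
    (∀ i, 0 < d i) ∧
    ρ = (U : Matrix (Fin n) (Fin n) ℂ) * Matrix.diagonal (fun i => (d i : ℂ)) *
        star (U : Matrix (Fin n) (Fin n) ℂ) ∧
    L = (U : Matrix (Fin n) (Fin n) ℂ) * Matrix.diagonal (fun i => (Real.log (d i) : ℂ)) *
        star (U : Matrix (Fin n) (Fin n) ℂ)

/-- For Hermitian `H`, `ρ` positive definite with logarithm `L = log ρ`,
if `[H, ρ] ≠ 0` then the skew information `-Tr([H,ρ][H,log ρ])` is a positive real number. -/
theorem skew_information_pos {n : ℕ} (H ρ L : Matrix (Fin n) (Fin n) ℂ)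
    (hH : H.IsHermitian) (hρ : ρ.PosDef) (hL : IsSpectralLog ρ L)
    (hc : ⁅H, ρ⁆ ≠ 0) :
    (-(⁅H, ρ⁆ * ⁅H, L⁆).trace).im = 0 ∧ 0 < (-(⁅H, ρ⁆ * ⁅H, L⁆).trace).re := by
  obtain ⟨U, d, hd, hρeq, hLeq⟩ := hL
  set V : Matrix (Fin n) (Fin n) ℂ := (U : Matrix (Fin n) (Fin n) ℂ) with hVdef
  have hUV : V * star V = 1 := U.2.2
  have hVU : star V * V = 1 := Matrix.UnitaryGroup.star_mul_self U
  set K : Matrix (Fin n) (Fin n) ℂ := star V * H * V with hKdef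
  have hK : K.IsHermitian := by
    have : Kᴴ = K := by
      rw [hKdef, ← Matrix.star_eq_conjTranspose]
      simp only [Matrix.conjTranspose_mul, Matrix.star_eq_conjTranspose,
        Matrix.conjTranspose_conjTranspose, hH.eq, Matrix.mul_assoc]
    exact this
  set D : Matrix (Fin n) (Fin n) ℂ := Matrix.diagonal (fun i => (d i : ℂ)) with hDdef
  set D' : Matrix (Fin n) (Fin n) ℂ := Matrix.diagonal (fun i => (Real.log (d i) : ℂ)) with hD'def
  have hH' : H = V * K * star V := by
    rw [hKdef]
    have : V * (star V * H * V) * star V = (V * star V) * H * (V * star V) := by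
      simp only [Matrix.mul_assoc]
    rw [this, hUV, Matrix.one_mul, Matrix.mul_one]
  have key : ∀ A B : Matrix (Fin n) (Fin n) ℂ,
      (V * A * star V) * (V * B * star V) = V * (A * B) * star V := by
    intro A B
    have h1 : star V * (V * (B * star V)) = B * star V := by
      rw [← Matrix.mul_assoc, hVU, Matrix.one_mul]
    simp only [Matrix.mul_assoc, h1]
  have hcomm1 : ⁅H, ρ⁆ = V * ⁅K, D⁆ * star V := by
    rw [Ring.lie_def, Ring.lie_def, hH', hρeq, key, key, Matrix.mul_sub, Matrix.sub_mul]
  have hcomm2 : ⁅H, L⁆ = V * ⁅K, D'⁆ * star V := by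
    rw [Ring.lie_def, Ring.lie_def, hH', hLeq, key, key, Matrix.mul_sub, Matrix.sub_mul]
  have htr : (⁅H, ρ⁆ * ⁅H, L⁆).trace = (⁅K, D⁆ * ⁅K, D'⁆).trace := by
    rw [hcomm1, hcomm2, key, Matrix.trace_mul_comm, ← Matrix.mul_assoc, hVU, Matrix.one_mul]
  -- entrywise formula
  have hMN : ∀ i j : Fin n, (⁅K, D⁆) i j = K i j * ((d j : ℂ) - (d i : ℂ)) := by
    intro i j
    simp [Ring.lie_def, hDdef, hD'def, Matrix.sub_apply, Matrix.mul_diagonal, Matrix.diagonal_mul]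
    ring
  have hMN' : ∀ i j : Fin n, (⁅K, D'⁆) i j =
      K i j * ((Real.log (d j) : ℂ) - (Real.log (d i) : ℂ)) := by
    intro i j
    simp [Ring.lie_def, hDdef, hD'def, Matrix.sub_apply, Matrix.mul_diagonal, Matrix.diagonal_mul]
    ring
  set S : ℝ := ∑ i : Fin n, ∑ j : Fin n,
    Complex.normSq (K i j) * ((d i - d j) * (Real.log (d i) - Real.log (d j))) with hSdef
  have htrS : -(⁅H, ρ⁆ * ⁅H, L⁆).trace = (S : ℂ) := by
    have hexp : (⁅K, D⁆ * ⁅K, D'⁆).trace = ∑ i : Fin n, ∑ j : Fin n, ⁅K, D⁆ i j * ⁅K, D'⁆ j i := by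
      simp [Matrix.trace, Matrix.diag, Matrix.mul_apply]
    rw [htr, hexp, hSdef]
    push_cast
    rw [← Finset.sum_neg_distrib]
    refine Finset.sum_congr rfl fun i _ => ?_
    rw [← Finset.sum_neg_distrib]
    refine Finset.sum_congr rfl fun j _ => ?_
    rw [hMN, hMN', ← hK.apply j i, Complex.star_def, ← Complex.mul_conj]
    ring
  have hterm_nonneg : ∀ a b : Fin n,
      0 ≤ Complex.normSq (K a b) * ((d a - d b) * (Real.log (d a) - Real.log (d b))) := by
    intro a b
    apply mul_nonneg (Complex.normSq_nonneg _)
    rcases le_total (d b) (d a) with h | h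
    · have := Real.log_le_log (hd b) h
      exact mul_nonneg (by linarith) (by linarith)
    · have := Real.log_le_log (hd a) h
      nlinarith
  have hKD : ⁅K, D⁆ ≠ 0 := by
    intro h
    apply hc
    rw [hcomm1, h, Matrix.mul_zero, Matrix.zero_mul]
  obtain ⟨i, j, hij⟩ : ∃ i j, ⁅K, D⁆ i j ≠ 0 := by
    by_contra h
    push_neg at h
    exact hKD (by ext i j; simpa using h i j)
  rw [hMN i j] at hij
  have h1 : K i j ≠ 0 := left_ne_zero_of_mul hij
  have h2 : d i ≠ d j := by
    intro h
    apply hij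
    rw [h]
    ring
  have hpos : 0 < Complex.normSq (K i j) * ((d i - d j) * (Real.log (d i) - Real.log (d j))) := by
    apply mul_pos (Complex.normSq_pos.mpr h1)
    rcases lt_or_gt_of_ne h2 with h | h
    · have := Real.log_lt_log (hd i) h
      exact mul_pos_of_neg_of_neg (by linarith) (by linarith)
    · have := Real.log_lt_log (hd j) h
      exact mul_pos (by linarith) (by linarith)
  have hS : 0 < S := by
    rw [hSdef]
    exact Finset.sum_pos' (fun a _ => Finset.sum_nonneg fun b _ => hterm_nonneg a b)
      ⟨i, Finset.mem_univ i, Finset.sum_pos' (fun b _ => hterm_nonneg i b)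
        ⟨j, Finset.mem_univ j, hpos⟩⟩
  rw [htrS]
  exact ⟨Complex.ofReal_im S, by simpa using hS⟩
end

section
/- For a product state ρ_A ⊗ ρ_B and Hamiltonian H with [H, ρ_A⊗ρ_B] ≠ 0, the skew information I^s(H, ρ_A⊗ρ_B) = -Tr([H, ρ_A⊗ρ_B][H, log(ρ_A⊗ρ_B)]) is strictly positive. -/
open Matrix Kronecker
open scoped ComplexOrder

section Helpers

variable {ι : Type*} [Fintype ι] [DecidableEq ι]

lemma comm_diag_apply (K : Matrix ι ι ℂ) (v : ι → ℂ) (p q : ι) :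
    ⁅K, Matrix.diagonal v⁆ p q = K p q * (v q - v p) := by
  simp only [Ring.lie_def, Matrix.sub_apply, Matrix.mul_diagonal, Matrix.diagonal_mul]
  ring

lemma log_aux {x y : ℝ} (hx : 0 < x) (hy : 0 < y) :
    0 ≤ (x - y) * (Real.log x - Real.log y) := by
  rcases le_total y x with h | h
  · exact mul_nonneg (by linarith) (by simp [sub_nonneg]; exact Real.log_le_log hy h)
  · nlinarith [Real.log_le_log hx h]

lemma log_aux_pos {x y : ℝ} (hx : 0 < x) (hy : 0 < y) (hne : x ≠ y) :
    0 < (x - y) * (Real.log x - Real.log y) := by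
  rcases lt_or_gt_of_ne hne with h | h
  · nlinarith [Real.log_lt_log hx h]
  · exact mul_pos (by linarith) (by simp [sub_pos]; exact Real.log_lt_log hy h)

lemma trace_comm_diag (K : Matrix ι ι ℂ) (hK : K.IsHermitian) (d : ι → ℝ) :
    -(⁅K, Matrix.diagonal (fun i => (d i : ℂ))⁆ *
       ⁅K, Matrix.diagonal (fun i => (Real.log (d i) : ℂ))⁆).trace
    = ((∑ p, ∑ q, Complex.normSq (K p q) *
        ((d q - d p) * (Real.log (d q) - Real.log (d p)))) : ℝ) := by
  rw [Matrix.trace]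
  simp only [Matrix.diag_apply, Matrix.mul_apply, comm_diag_apply]
  push_cast
  rw [← Finset.sum_neg_distrib]
  refine Finset.sum_congr rfl fun p _ => ?_
  rw [← Finset.sum_neg_distrib]
  refine Finset.sum_congr rfl fun q _ => ?_
  have h1 : K q p = (starRingEnd ℂ) (K p q) := (hK.apply q p).symm
  have h2 : K p q * (starRingEnd ℂ) (K p q) = (Complex.normSq (K p q) : ℂ) :=
    Complex.mul_conj _
  rw [h1]
  linear_combination (((d q : ℂ) - d p) * ((Real.log (d q) : ℂ) - Real.log (d p))) * h2

lemma sum_pos_of_comm_ne (K : Matrix ι ι ℂ) (d : ι → ℝ) (hd : ∀ i, 0 < d i)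
    (hc : ⁅K, Matrix.diagonal (fun i => (d i : ℂ))⁆ ≠ 0) :
    0 < ∑ p, ∑ q, Complex.normSq (K p q) *
        ((d q - d p) * (Real.log (d q) - Real.log (d p))) := by
  have hex : ∃ p q, K p q ≠ 0 ∧ d q ≠ d p := by
    by_contra h
    push_neg at h
    apply hc
    ext p q
    rw [comm_diag_apply]
    by_cases hK : K p q = 0
    · simp [hK]
    · have : d q = d p := by
        by_contra hne
        exact hne (h p q hK) |>.elim
      simp [this]
  obtain ⟨p, q, hKpq, hdq⟩ := hex
  have hterm : ∀ a b : ι, 0 ≤ Complex.normSq (K a b) *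
      ((d b - d a) * (Real.log (d b) - Real.log (d a))) :=
    fun a b => mul_nonneg (Complex.normSq_nonneg _) (log_aux (hd b) (hd a))
  have hpos : 0 < Complex.normSq (K p q) *
      ((d q - d p) * (Real.log (d q) - Real.log (d p))) :=
    mul_pos (Complex.normSq_pos.2 hKpq) (log_aux_pos (hd q) (hd p) hdq)
  refine Finset.sum_pos' (fun a _ => Finset.sum_nonneg fun b _ => hterm a b)
    ⟨p, Finset.mem_univ p, ?_⟩
  exact Finset.sum_pos' (fun b _ => hterm p b) ⟨q, Finset.mem_univ q, hpos⟩

lemma comm_conj (W H A : Matrix ι ι ℂ) (hW1 : star W * W = 1) (hW2 : W * star W = 1) :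
    ⁅H, W * A * star W⁆ = W * ⁅star W * H * W, A⁆ * star W := by
  have e1 : ∀ X : Matrix ι ι ℂ, W * (star W * X) = X := fun X => by
    rw [← mul_assoc, hW2, one_mul]
  have e2 : ∀ X : Matrix ι ι ℂ, star W * (W * X) = X := fun X => by
    rw [← mul_assoc, hW1, one_mul]
  simp [Ring.lie_def, Matrix.mul_sub, Matrix.sub_mul, mul_assoc, e1, e2, hW1, hW2]

lemma trace_conj_mul (W X Y : Matrix ι ι ℂ) (hW1 : star W * W = 1) :
    (W * X * star W * (W * Y * star W)).trace = (X * Y).trace := by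
  have e2 : ∀ Z : Matrix ι ι ℂ, star W * (W * Z) = Z := fun Z => by
    rw [← mul_assoc, hW1, one_mul]
  have : W * X * star W * (W * Y * star W) = W * (X * Y) * star W := by
    simp [mul_assoc, e2]
  rw [this, Matrix.trace_mul_comm, ← mul_assoc, ← mul_assoc, hW1, one_mul]

lemma main_reduced (W : Matrix ι ι ℂ) (hW1 : star W * W = 1) (hW2 : W * star W = 1)
    (d : ι → ℝ) (hd : ∀ i, 0 < d i) (H : Matrix ι ι ℂ) (hH : H.IsHermitian)
    (ρ L : Matrix ι ι ℂ)
    (hρ : ρ = W * Matrix.diagonal (fun i => (d i : ℂ)) * star W)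
    (hL : L = W * Matrix.diagonal (fun i => (Real.log (d i) : ℂ)) * star W)
    (hc : ⁅H, ρ⁆ ≠ 0) :
    (-(⁅H, ρ⁆ * ⁅H, L⁆).trace).im = 0 ∧ 0 < (-(⁅H, ρ⁆ * ⁅H, L⁆).trace).re := by
  set K := star W * H * W with hK
  have hKH : K.IsHermitian := by
    unfold Matrix.IsHermitian
    simp [hK, Matrix.star_eq_conjTranspose, Matrix.conjTranspose_mul, Matrix.mul_assoc,
      hH.eq]
  have hcK : ⁅K, Matrix.diagonal (fun i => (d i : ℂ))⁆ ≠ 0 := by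
    intro h0
    apply hc
    rw [hρ, comm_conj W H _ hW1 hW2, ← hK, h0, Matrix.mul_zero, Matrix.zero_mul]
  have htr : -(⁅H, ρ⁆ * ⁅H, L⁆).trace
      = ((∑ p, ∑ q, Complex.normSq (K p q) *
          ((d q - d p) * (Real.log (d q) - Real.log (d p)))) : ℝ) := by
    rw [hρ, hL, comm_conj W H _ hW1 hW2, comm_conj W H _ hW1 hW2, ← hK,
      trace_conj_mul W _ _ hW1]
    exact trace_comm_diag K hKH d
  rw [htr]
  exact ⟨Complex.ofReal_im _, by rw [Complex.ofReal_re]; exact sum_pos_of_comm_ne K d hd hcK⟩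

end Helpers

/-- For a product state `ρ_A ⊗ ρ_B` of positive definite density matrices with logarithms
`L_A, L_B` (so `log(ρ_A⊗ρ_B) = L_A ⊗ I + I ⊗ L_B`) and Hermitian `H` with
`[H, ρ_A⊗ρ_B] ≠ 0`, the skew information
`I^s(H, ρ_A⊗ρ_B) = -Tr([H,ρ_A⊗ρ_B][H,log(ρ_A⊗ρ_B)])` is a strictly positive real number. -/
theorem skew_information_product_pos {m n : ℕ}
    (ρA LA : Matrix (Fin m) (Fin m) ℂ) (ρB LB : Matrix (Fin n) (Fin n) ℂ)
    (hρA : ρA.PosDef) (hρB : ρB.PosDef) (htrA : ρA.trace = 1) (htrB : ρB.trace = 1)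
    (hLA : IsSpectralLog ρA LA) (hLB : IsSpectralLog ρB LB)
    (H : Matrix (Fin m × Fin n) (Fin m × Fin n) ℂ) (hH : H.IsHermitian)
    (hc : ⁅H, ρA ⊗ₖ ρB⁆ ≠ 0) :
    (-(⁅H, ρA ⊗ₖ ρB⁆ *
        ⁅H, LA ⊗ₖ (1 : Matrix (Fin n) (Fin n) ℂ) +
          (1 : Matrix (Fin m) (Fin m) ℂ) ⊗ₖ LB⁆).trace).im = 0 ∧
    0 < (-(⁅H, ρA ⊗ₖ ρB⁆ *
        ⁅H, LA ⊗ₖ (1 : Matrix (Fin n) (Fin n) ℂ) +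
          (1 : Matrix (Fin m) (Fin m) ℂ) ⊗ₖ LB⁆).trace).re := by
  obtain ⟨U, a, ha, hρAeq, hLAeq⟩ := hLA
  obtain ⟨V, b, hb, hρBeq, hLBeq⟩ := hLB
  set Um := (U : Matrix (Fin m) (Fin m) ℂ) with hUm
  set Vm := (V : Matrix (Fin n) (Fin n) ℂ) with hVm
  set W := Um ⊗ₖ Vm with hW
  set d := fun p : Fin m × Fin n => a p.1 * b p.2 with hdd
  have hU1 : star Um * Um = 1 := (Unitary.mem_iff.mp U.prop).1
  have hU2 : Um * star Um = 1 := (Unitary.mem_iff.mp U.prop).2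
  have hV1 : star Vm * Vm = 1 := (Unitary.mem_iff.mp V.prop).1
  have hV2 : Vm * star Vm = 1 := (Unitary.mem_iff.mp V.prop).2
  have kron_star : ∀ {α β : Type} [Fintype α] [Fintype β] (A : Matrix α α ℂ) (B : Matrix β β ℂ),
      star (A ⊗ₖ B) = star A ⊗ₖ star B := by
    intro α β _ _ A B
    ext ⟨i, j⟩ ⟨k, l⟩
    simp [Matrix.star_eq_conjTranspose, Matrix.conjTranspose_apply, kroneckerMap_apply]
  have hW1 : star W * W = 1 := by
    rw [hW, kron_star, ← Matrix.mul_kronecker_mul, hU1, hV1, Matrix.one_kronecker_one]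
  have hW2 : W * star W = 1 := by
    rw [hW, kron_star, ← Matrix.mul_kronecker_mul, hU2, hV2, Matrix.one_kronecker_one]
  have hρ : ρA ⊗ₖ ρB = W * Matrix.diagonal (fun p => (d p : ℂ)) * star W := by
    rw [hρAeq, hρBeq, Matrix.mul_kronecker_mul, Matrix.mul_kronecker_mul,
      Matrix.diagonal_kronecker_diagonal, hW, kron_star]
    congr 2
    congr 1
    funext q
    simp only [hdd]
    push_cast
    ring
  have hL : LA ⊗ₖ (1 : Matrix (Fin n) (Fin n) ℂ) + (1 : Matrix (Fin m) (Fin m) ℂ) ⊗ₖ LB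
      = W * Matrix.diagonal (fun p => (Real.log (d p) : ℂ)) * star W := by
    have h1n : (1 : Matrix (Fin n) (Fin n) ℂ) = Vm * (1 : Matrix (Fin n) (Fin n) ℂ) * star Vm := by
      rw [mul_one, hV2]
    have h1m : (1 : Matrix (Fin m) (Fin m) ℂ) = Um * (1 : Matrix (Fin m) (Fin m) ℂ) * star Um := by
      rw [mul_one, hU2]
    rw [hLAeq, hLBeq]
    rw [h1n, h1m]
    rw [Matrix.mul_kronecker_mul, Matrix.mul_kronecker_mul,
      Matrix.mul_kronecker_mul, Matrix.mul_kronecker_mul, hW, kron_star,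
      ← Matrix.add_mul, ← Matrix.mul_add]
    congr 2
    rw [← Matrix.diagonal_one, ← Matrix.diagonal_one,
      Matrix.diagonal_kronecker_diagonal, Matrix.diagonal_kronecker_diagonal,
      Matrix.diagonal_add]
    have hlog : ∀ q : Fin m × Fin n, Real.log (d q) = Real.log (a q.1) + Real.log (b q.2) := by
      intro q
      simp only [hdd]
      exact Real.log_mul (ne_of_gt (ha q.1)) (ne_of_gt (hb q.2))
    congr 2
    funext q
    simp only [hlog]
    push_cast
    ring
  exact main_reduced W hW1 hW2 d (fun p => mul_pos (ha p.1) (hb p.2)) H hH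
    (ρA ⊗ₖ ρB) (LA ⊗ₖ (1 : Matrix (Fin n) (Fin n) ℂ) + (1 : Matrix (Fin m) (Fin m) ℂ) ⊗ₖ LB)
    hρ hL hc
end

section
/- For two qubits with H_A = H_B = -(ω/2)σ_z, interaction H_I = (γ/2)(σ₊⊗σ₋ + σ₋⊗σ₊), and initial product thermal state ρ_A⊗ρ_B (β_A ≠ β_B, both positive), the total Hamiltonian H satisfies [H, ρ_A⊗ρ_B] ≠ 0, and Tr(i[H, ρ_A⊗ρ_B] log(ρ_A⊗ρ_B)) = 0 while -Tr([H,ρ_A⊗ρ_B][H, log(ρ_A⊗ρ_B)]) > 0. -/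
open Matrix Kronecker
open scoped ComplexOrder

noncomputable section TwoQubit

/-- Pauli `σ_z = |0⟩⟨0| - |1⟩⟨1|`. -/
def σz : Matrix (Fin 2) (Fin 2) ℂ := !![1, 0; 0, -1]

/-- Raising operator `σ₊ = |0⟩⟨1|`. -/
def σp : Matrix (Fin 2) (Fin 2) ℂ := !![0, 1; 0, 0]

/-- Lowering operator `σ₋ = |1⟩⟨0|`. -/
def σm : Matrix (Fin 2) (Fin 2) ℂ := !![0, 0; 1, 0]

/-- Local Hamiltonian `H_{A/B} = -(ω/2) σ_z`. -/
def Hloc (ω : ℝ) : Matrix (Fin 2) (Fin 2) ℂ := (-(ω : ℂ) / 2) • σz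

/-- Partition function `Z = Tr e^{-β H} = e^{βω/2} + e^{-βω/2}`. -/
def Zth (β ω : ℝ) : ℝ := Real.exp (β * ω / 2) + Real.exp (-(β * ω / 2))

/-- Thermal state `ρ = e^{-β H}/Z = diag(e^{βω/2}/Z, e^{-βω/2}/Z)` for `H = -(ω/2)σ_z`. -/
def ρth (β ω : ℝ) : Matrix (Fin 2) (Fin 2) ℂ :=
  Matrix.diagonal ![(Real.exp (β * ω / 2) / Zth β ω : ℂ), (Real.exp (-(β * ω / 2)) / Zth β ω : ℂ)]

/-- `log` of the thermal state `ρth β ω`. -/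
def logρth (β ω : ℝ) : Matrix (Fin 2) (Fin 2) ℂ :=
  Matrix.diagonal ![(Real.log (Real.exp (β * ω / 2) / Zth β ω) : ℂ),
    (Real.log (Real.exp (-(β * ω / 2)) / Zth β ω) : ℂ)]

/-- Total Hamiltonian `H = H_A⊗I + I⊗H_B + (γ/2)(σ₊⊗σ₋ + σ₋⊗σ₊)`. -/
def Htot (ω γ : ℝ) : Matrix (Fin 2 × Fin 2) (Fin 2 × Fin 2) ℂ :=
  Hloc ω ⊗ₖ (1 : Matrix (Fin 2) (Fin 2) ℂ) + (1 : Matrix (Fin 2) (Fin 2) ℂ) ⊗ₖ Hloc ω +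
    ((γ : ℂ) / 2) • (σp ⊗ₖ σm + σm ⊗ₖ σp)

/-- `log(ρ_A ⊗ ρ_B) = log ρ_A ⊗ I + I ⊗ log ρ_B`. -/
def logProd (βA βB ω : ℝ) : Matrix (Fin 2 × Fin 2) (Fin 2 × Fin 2) ℂ :=
  logρth βA ω ⊗ₖ (1 : Matrix (Fin 2) (Fin 2) ℂ) +
    (1 : Matrix (Fin 2) (Fin 2) ℂ) ⊗ₖ logρth βB ω

/-- Matrix with entry `c` at `((0,1),(1,0))` and `-c` at `((1,0),(0,1))`, zero elsewhere. -/
def E (c : ℂ) : Matrix (Fin 2 × Fin 2) (Fin 2 × Fin 2) ℂ :=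
  fun p q => if p = (0,1) ∧ q = (1,0) then c else if p = (1,0) ∧ q = (0,1) then -c else 0

lemma lie_Htot_diagonal (ω γ : ℝ) (d : Fin 2 × Fin 2 → ℂ) :
    ⁅Htot ω γ, Matrix.diagonal d⁆ = E ((γ/2) * (d (1,0) - d (0,1))) := by
  ext ⟨i,j⟩ ⟨k,l⟩
  rw [Ring.lie_def]
  simp only [Matrix.sub_apply, Matrix.mul_diagonal, Matrix.diagonal_mul]
  fin_cases i <;> fin_cases j <;> fin_cases k <;> fin_cases l <;>
    simp [Htot, Hloc, σz, σp, σm, E, Matrix.one_apply, Prod.ext_iff, Fin.ext_iff] <;> ring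

lemma trace_E_mul_diagonal (c : ℂ) (d : Fin 2 × Fin 2 → ℂ) :
    (E c * Matrix.diagonal d).trace = 0 := by
  simp [Matrix.trace, Matrix.mul_diagonal, E, Fintype.sum_prod_type, Fin.sum_univ_two,
    Prod.ext_iff, Fin.ext_iff, - Fin.val_eq_zero_iff]

lemma trace_E_mul_E (c₁ c₂ : ℂ) : (E c₁ * E c₂).trace = -(2 * (c₁ * c₂)) := by
  simp [Matrix.trace, Matrix.mul_apply, E, Fintype.sum_prod_type, Fin.sum_univ_two,
    Prod.ext_iff, Fin.ext_iff, - Fin.val_eq_zero_iff]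
  ring

lemma rho_kron (βA βB ω : ℝ) :
    ρth βA ω ⊗ₖ ρth βB ω = Matrix.diagonal fun p =>
      (![(Real.exp (βA * ω / 2) / Zth βA ω : ℂ), (Real.exp (-(βA * ω / 2)) / Zth βA ω : ℂ)] p.1) *
      (![(Real.exp (βB * ω / 2) / Zth βB ω : ℂ), (Real.exp (-(βB * ω / 2)) / Zth βB ω : ℂ)] p.2) := by
  rw [ρth, ρth, Matrix.diagonal_kronecker_diagonal]

lemma logProd_diag (βA βB ω : ℝ) :
    logProd βA βB ω = Matrix.diagonal fun p =>
      (![(Real.log (Real.exp (βA * ω / 2) / Zth βA ω) : ℂ),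
         (Real.log (Real.exp (-(βA * ω / 2)) / Zth βA ω) : ℂ)] p.1) +
      (![(Real.log (Real.exp (βB * ω / 2) / Zth βB ω) : ℂ),
         (Real.log (Real.exp (-(βB * ω / 2)) / Zth βB ω) : ℂ)] p.2) := by
  rw [logProd, logρth, logρth, ← Matrix.diagonal_one, Matrix.diagonal_kronecker_diagonal,
    Matrix.diagonal_kronecker_diagonal, ← Matrix.diagonal_add]
  congr 1 <;> try (funext p; simp)

lemma sign_lemma (ω γ βA βB ZA ZB : ℝ) (hω : 0 < ω) (hγ : 0 < γ) (hZA : 0 < ZA)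
    (hZB : 0 < ZB) (hne : βA ≠ βB) :
    0 < γ / 2 * (Real.exp (-(βA * ω / 2)) / ZA * (Real.exp (βB * ω / 2) / ZB)
        - Real.exp (βA * ω / 2) / ZA * (Real.exp (-(βB * ω / 2)) / ZB)) *
      (γ / 2 * ((βB - βA) * ω)) := by
  set x : ℝ := βA * ω / 2 with hx
  set y : ℝ := βB * ω / 2 with hy
  have key : 0 < (Real.exp (-x) * Real.exp y - Real.exp x * Real.exp (-y)) * ((βB - βA) * ω) := by
    rcases lt_or_gt_of_ne hne with hlt | hlt
    · have h1 : Real.exp x * Real.exp (-y) < Real.exp (-x) * Real.exp y := by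
        rw [← Real.exp_add, ← Real.exp_add]
        apply Real.exp_lt_exp.mpr
        rw [hx, hy]; nlinarith
      have h2 : 0 < (βB - βA) * ω := by nlinarith
      nlinarith
    · have h1 : Real.exp (-x) * Real.exp y < Real.exp x * Real.exp (-y) := by
        rw [← Real.exp_add, ← Real.exp_add]
        apply Real.exp_lt_exp.mpr
        rw [hx, hy]; nlinarith
      have h2 : (βB - βA) * ω < 0 := by nlinarith
      nlinarith
  have hexp : γ / 2 * (Real.exp (-x) / ZA * (Real.exp y / ZB)
        - Real.exp x / ZA * (Real.exp (-y) / ZB)) * (γ / 2 * ((βB - βA) * ω))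
      = (γ/2)^2 / (ZA * ZB) *
        ((Real.exp (-x) * Real.exp y - Real.exp x * Real.exp (-y)) * ((βB - βA) * ω)) := by
    field_simp
  rw [hexp]
  positivity

lemma neg_neg_two_mul_reim (a b : ℝ) :
    (-(-(2 * ((a:ℂ) * (b:ℂ))))).im = 0 ∧ (-(-(2 * ((a:ℂ) * (b:ℂ))))).re = 2 * (a * b) := by
  have h : -(-(2 * ((a:ℂ) * (b:ℂ)))) = ((2 * (a * b) : ℝ) : ℂ) := by push_cast; ring
  rw [h]
  simp

/-- For two qubits with `H_A = H_B = -(ω/2)σ_z`, interaction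
`H_I = (γ/2)(σ₊⊗σ₋+σ₋⊗σ₊)` and initial product thermal state `ρ_A⊗ρ_B` with
`β_A ≠ β_B` both positive: `[H, ρ_A⊗ρ_B] ≠ 0`,
`Tr(i[H,ρ_A⊗ρ_B] log(ρ_A⊗ρ_B)) = 0`, and
`-Tr([H,ρ_A⊗ρ_B][H,log(ρ_A⊗ρ_B)])` is a strictly positive real. -/
theorem two_qubit_example (ω γ βA βB : ℝ) (hω : 0 < ω) (hγ : 0 < γ)
    (hβA : 0 < βA) (hβB : 0 < βB) (hne : βA ≠ βB) :
    ⁅Htot ω γ, ρth βA ω ⊗ₖ ρth βB ω⁆ ≠ 0 ∧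
    (Complex.I • ⁅Htot ω γ, ρth βA ω ⊗ₖ ρth βB ω⁆ * logProd βA βB ω).trace = 0 ∧
    (-(⁅Htot ω γ, ρth βA ω ⊗ₖ ρth βB ω⁆ *
        ⁅Htot ω γ, logProd βA βB ω⁆).trace).im = 0 ∧
    0 < (-(⁅Htot ω γ, ρth βA ω ⊗ₖ ρth βB ω⁆ *
        ⁅Htot ω γ, logProd βA βB ω⁆).trace).re := by
  have hZA : 0 < Zth βA ω := by unfold Zth; positivity
  have hZB : 0 < Zth βB ω := by unfold Zth; positivity
  have hCρ : ⁅Htot ω γ, ρth βA ω ⊗ₖ ρth βB ω⁆ =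
      E ((γ / 2 * (Real.exp (-(βA * ω / 2)) / Zth βA ω * (Real.exp (βB * ω / 2) / Zth βB ω)
        - Real.exp (βA * ω / 2) / Zth βA ω * (Real.exp (-(βB * ω / 2)) / Zth βB ω)) : ℝ) : ℂ) := by
    rw [rho_kron, lie_Htot_diagonal]
    congr 1
    push_cast
    simp
  have hlog : ∀ β : ℝ, 0 < Zth β ω → ∀ t : ℝ,
      Real.log (Real.exp t / Zth β ω) = t - Real.log (Zth β ω) := by
    intro β hZ t
    rw [Real.log_div (Real.exp_ne_zero t) (ne_of_gt hZ), Real.log_exp]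
  have hCL : ⁅Htot ω γ, logProd βA βB ω⁆ = E ((γ / 2 * ((βB - βA) * ω) : ℝ) : ℂ) := by
    rw [logProd_diag, lie_Htot_diagonal]
    congr 1
    simp only [hlog βA hZA, hlog βB hZB, Matrix.cons_val_zero, Matrix.cons_val_one,
      Matrix.head_cons]
    push_cast
    ring
  have hsign := sign_lemma ω γ βA βB (Zth βA ω) (Zth βB ω) hω hγ hZA hZB hne
  have hRρ_ne : γ / 2 * (Real.exp (-(βA * ω / 2)) / Zth βA ω * (Real.exp (βB * ω / 2) / Zth βB ω)
      - Real.exp (βA * ω / 2) / Zth βA ω * (Real.exp (-(βB * ω / 2)) / Zth βB ω)) ≠ 0 := by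
    intro h
    rw [h, zero_mul] at hsign
    exact lt_irrefl 0 hsign
  refine ⟨?_, ?_, ?_, ?_⟩
  · rw [hCρ]
    intro h
    apply hRρ_ne
    have h2 := congrFun (congrFun h ((0:Fin 2),(1:Fin 2))) ((1:Fin 2),(0:Fin 2))
    have h3 : (↑(γ / 2 * (Real.exp (-(βA * ω / 2)) / Zth βA ω * (Real.exp (βB * ω / 2) / Zth βB ω)
        - Real.exp (βA * ω / 2) / Zth βA ω * (Real.exp (-(βB * ω / 2)) / Zth βB ω))) : ℂ) = 0 := by
      simpa only [E, and_self, if_true, reduceIte, Matrix.zero_apply] using h2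
    exact_mod_cast h3
  · rw [hCρ, logProd_diag, Matrix.smul_mul, Matrix.trace_smul, trace_E_mul_diagonal, smul_zero]
  · rw [hCρ, hCL, trace_E_mul_E]
    exact (neg_neg_two_mul_reim _ _).1
  · rw [hCρ, hCL, trace_E_mul_E, (neg_neg_two_mul_reim _ _).2]
    linarith

end TwoQubit
end
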